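/- Let s,ℓ,c be positive integers with c+ℓ=s and n=3s-ℓ=2ℓ+3c. Let F ⊆ 2^[n] be a shifted family with ν(F) < s and d(F) ≥ c+2. Then y_F(3) ≥ (2ℓ+c)(2c−1). -/

import Mathlib

open Finset

/-- The ground set `[n] = {1, 2, …, n}`. -/
def ground (n : ℕ) : Finset ℕ := Finset.Icc 1 n

-- The matching number `ν(F)` of a family: the size of the largest pairwise
-- disjoint subfamily of `F`.
open Classical in
noncomputable def matchingNumber (F : Finset (Finset ℕ)) : ℕ :=
  (F.powerset.filter fun M : Finset (Finset ℕ) =>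
      (M : Set (Finset ℕ)).Pairwise fun A B => Disjoint A B).sup Finset.card

-- `e(n, s)`: the maximum size of a family `F ⊆ 2^[n]` with `ν(F) < s`.
open Classical in
noncomputable def extremalNumber (n s : ℕ) : ℕ :=
  (((ground n).powerset.powerset).filter fun F => matchingNumber F < s).sup Finset.card

/-- The family `P(s, ℓ) = {P ⊆ [n] : |P| + |P ∩ [ℓ-1]| ≥ 3}` (it depends only on `n, ℓ`). -/
def famP (n l : ℕ) : Finset (Finset ℕ) :=
  (ground n).powerset.filter fun A => 3 ≤ A.card + (A ∩ Finset.Icc 1 (l - 1)).card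

/-- The family `P'(s, ℓ)`: all subsets of `[n]` of size at least `3` together with
all `2`-element subsets of `[2ℓ-1]`. -/
def famP' (n l : ℕ) : Finset (Finset ℕ) :=
  ((ground n).powerset.filter fun A => 3 ≤ A.card) ∪
    (Finset.Icc 1 (2 * l - 1)).powersetCard 2

/-- The family `Q(s, ℓ)`: all subsets of `[n]` of size at least `3` together with all
`2`-element subsets of `[s+ℓ-1]`, with all `3`-element subsets of `[s+ℓ, n]` removed. -/
def famQ (n s l : ℕ) : Finset (Finset ℕ) :=
  (((ground n).powerset.filter fun A => 3 ≤ A.card) ∪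
      (Finset.Icc 1 (s + l - 1)).powersetCard 2) \
    (Finset.Icc (s + l) n).powersetCard 3

/-- The family `W(s, ℓ) = {P ⊆ [n] : |P ∩ [2s-1]| ≥ 2}`. -/
def famW (n s : ℕ) : Finset (Finset ℕ) :=
  (ground n).powerset.filter fun A => 2 ≤ (A ∩ Finset.Icc 1 (2 * s - 1)).card

/-- The `(i ← j)`-shift of a set. -/
def shiftSet (i j : ℕ) (A : Finset ℕ) : Finset ℕ :=
  if j ∈ A ∧ i ∉ A then insert i (A.erase j) else A

/-- The `(i ← j)`-shift of a family. -/
def shiftFam (i j : ℕ) (F : Finset (Finset ℕ)) : Finset (Finset ℕ) :=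
  F.image (shiftSet i j) ∪ F.filter fun A => shiftSet i j A ∈ F

/-- A family `F ⊆ 2^[n]` is shifted if it is invariant under all `(i ← j)`-shifts
with `1 ≤ i < j ≤ n`. -/
def IsShifted (n : ℕ) (F : Finset (Finset ℕ)) : Prop :=
  ∀ i j : ℕ, 1 ≤ i → i < j → j ≤ n → shiftFam i j F = F

/-- `A` can be shifted to `B`: some sequence of `(a ← b)`-shifts with `a < b`
transforms `A` into `B`. -/
def ShiftsTo (n : ℕ) (A B : Finset ℕ) : Prop :=
  Relation.ReflTransGen
    (fun X Y => ∃ a b : ℕ, 1 ≤ a ∧ a < b ∧ b ≤ n ∧ Y = shiftSet a b X) A B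

/-- A family `F ⊆ 2^[n]` is an up-set if it is closed under supersets inside `[n]`. -/
def IsUpSet (n : ℕ) (F : Finset (Finset ℕ)) : Prop :=
  ∀ A ∈ F, ∀ B : Finset ℕ, A ⊆ B → B ⊆ ground n → B ∈ F

/-- The `k`-th layer of a family: its `k`-element members (as subsets of `[n]`). -/
def layer (n : ℕ) (F : Finset (Finset ℕ)) (k : ℕ) : Finset (Finset ℕ) :=
  F ∩ (ground n).powersetCard k

/-- `y_F(k)`: the number of `k`-element subsets of `[n]` that do not belong to `F`. -/
def yF (n : ℕ) (F : Finset (Finset ℕ)) (k : ℕ) : ℕ :=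
  Nat.choose n k - (layer n F k).card

/-- The defining condition for `d(F)` (with parameter `ℓ`). -/
def DCond (l : ℕ) (F : Finset (Finset ℕ)) (d : ℕ) : Prop :=
  (Even d ∧ ∃ i ∈ Finset.Icc 1 (l + d / 2), ({i, 2 * l + d + 1 - i} : Finset ℕ) ∉ F) ∨
  (Odd d ∧ (({1, 2 * l + d} : Finset ℕ) ∉ F ∨
    ∃ i ∈ Finset.Icc 3 (l + (d + 1) / 2), ({i, 2 * l + d + 2 - i} : Finset ℕ) ∉ F))

/-- `d(F)`: the smallest `d ≥ 0` satisfying the condition `DCond ℓ F d`. -/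
noncomputable def dF (l : ℕ) (F : Finset (Finset ℕ)) : ℕ := sInf {d : ℕ | DCond l F d}

/-!
Write `m = 2ℓ + c`, so that `n = m + 2c` and `s = ℓ + c`. Because `d(F) ≥ c + 2` and `F` is
shifted, `F` contains every pair `{a, b}` with `a < b` and `a + b ≤ m + 1`, and every such pair with
`a ≥ 3` and `a + b ≤ m + 2`.

For `e ⊆ [m + 1, n]` let `miss(e)` count the `x ∈ [1, m]` with `{x} ∪ e ∉ F`; by shiftedness
`{x} ∪ e ∈ F` for all `x ≤ m - miss(e)`. If `c` disjoint pairs `e_j ⊆ [m + 1, n]` had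
`∑ miss(e_j) < m`, a greedy Hall argument would give distinct `ν_j ≤ m - miss(e_j)` whose complement
in `[1, m]` splits into `ℓ` of the pairs above; together with the triples `{ν_j} ∪ e_j` they form a
matching of size `s`. So each of the `2c - 1` perfect matchings of a one-factorization of the
complete graph on `[m + 1, n]` accounts for at least `m` triples missing from `F`, and these triples
are all distinct. For `c = 1` the pairs `{i, 2ℓ + 3 - i}`, `i ≤ ℓ + 1`, already form a matching of
size `s`.
-/

lemma shiftSet_insert {i j : ℕ} {e : Finset ℕ} (hij : i ≠ j) (hi : i ∉ e) (hj : j ∉ e) :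
    shiftSet i j (insert j e) = insert i e := by
  rw [shiftSet, if_pos ⟨mem_insert_self j e, by simp [hij, hi]⟩, erase_insert hj]

namespace IsShifted

variable {n : ℕ} {F : Finset (Finset ℕ)}

lemma shiftSet_mem (hsh : IsShifted n F) {A : Finset ℕ} (hA : A ∈ F) {i j : ℕ} (hi : 1 ≤ i)
    (hij : i < j) (hj : j ≤ n) : shiftSet i j A ∈ F := by
  rw [← hsh i j hi hij hj]
  exact mem_union_left _ (mem_image_of_mem _ hA)

lemma insert_mem_of_le (hsh : IsShifted n F) {e : Finset ℕ} {x y : ℕ} (hx : 1 ≤ x) (hxy : x ≤ y)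
    (hy : y ≤ n) (hxe : x ∉ e) (hye : y ∉ e) (h : insert y e ∈ F) : insert x e ∈ F := by
  obtain rfl | hlt := hxy.eq_or_lt
  · exact h
  · simpa only [shiftSet_insert hlt.ne hxe hye] using hsh.shiftSet_mem h hx hlt hy

lemma pair_mem_of_le (hsh : IsShifted n F) {a b i j : ℕ} (ha : 1 ≤ a) (hab : a < b) (hai : a ≤ i)
    (hbj : b ≤ j) (hij : i < j) (hj : j ≤ n) (h : {i, j} ∈ F) : {a, b} ∈ F := by
  have haj : ({a, j} : Finset ℕ) ∈ F :=
    hsh.insert_mem_of_le ha hai (by omega) (by simp; omega) (by simp; omega) h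
  rw [pair_comm] at haj ⊢
  exact hsh.insert_mem_of_le (by omega) hbj hj (by simp; omega) (by simp; omega) haj

end IsShifted

section Matchings

variable {F : Finset (Finset ℕ)}

lemma card_le_matchingNumber {M : Finset (Finset ℕ)} (hMF : M ⊆ F)
    (hM : (M : Set (Finset ℕ)).Pairwise fun A B => Disjoint A B) : #M ≤ matchingNumber F := by
  classical
  exact le_sup (f := card) (mem_filter.2 ⟨mem_powerset.2 hMF, hM⟩)

lemma le_matchingNumber_of_pairwiseDisjoint {ι : Type*} (I : Finset ι) (g : ι → Finset ℕ)
    (hgF : ∀ i ∈ I, g i ∈ F) (hg : ∀ i ∈ I, (g i).Nonempty)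
    (hdisj : (I : Set ι).PairwiseDisjoint g) : #I ≤ matchingNumber F := by
  have hinj : Set.InjOn g I := fun i hi j hj hij => by
    by_contra hne
    have := hdisj hi hj hne
    rw [Function.onFun, hij] at this
    exact (hg j hj).ne_empty (disjoint_self.1 this)
  rw [← card_image_of_injOn hinj]
  refine card_le_matchingNumber (image_subset_iff.2 hgF) ?_
  rintro _ hA _ hB hAB
  obtain ⟨i, hi, rfl⟩ := mem_image.1 hA
  obtain ⟨j, hj, rfl⟩ := mem_image.1 hB
  exact hdisj hi hj fun h => hAB (congrArg g h)

lemma add_le_matchingNumber {ι κ : Type*} (I : Finset ι) (K : Finset κ) (g : ι → Finset ℕ)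
    (g' : κ → Finset ℕ) (hgF : ∀ i ∈ I, g i ∈ F) (hg'F : ∀ k ∈ K, g' k ∈ F)
    (hg : ∀ i ∈ I, (g i).Nonempty) (hg' : ∀ k ∈ K, (g' k).Nonempty)
    (hdisj : (I : Set ι).PairwiseDisjoint g) (hdisj' : (K : Set κ).PairwiseDisjoint g')
    (hcross : ∀ i ∈ I, ∀ k ∈ K, Disjoint (g i) (g' k)) : #I + #K ≤ matchingNumber F := by
  rw [← card_disjSum]
  refine le_matchingNumber_of_pairwiseDisjoint _ (Sum.elim g g') ?_ ?_ ?_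
  · rintro (i | k) h <;> simp only [inl_mem_disjSum, inr_mem_disjSum] at h
    exacts [hgF i h, hg'F k h]
  · rintro (i | k) h <;> simp only [inl_mem_disjSum, inr_mem_disjSum] at h
    exacts [hg i h, hg' k h]
  rintro (i | k) hi (i' | k') hi' hne <;>
    simp only [mem_coe, inl_mem_disjSum, inr_mem_disjSum] at hi hi'
  · exact hdisj hi hi' fun h => hne (congrArg _ h)
  · exact hcross i hi k' hi'
  · exact (hcross i' hi' k hi).symm
  · exact hdisj' hi hi' fun h => hne (congrArg _ h)

lemma pairwiseDisjoint_insert {ι : Type*} {J : Set ι} {e : ι → Finset ℕ} {ν : ι → ℕ}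
    (hdisj : J.PairwiseDisjoint e) (hν : Set.InjOn ν J) (hνe : ∀ i ∈ J, ∀ j ∈ J, ν i ∉ e j) :
    J.PairwiseDisjoint fun i => insert (ν i) (e i) := by
  intro i hi j hj hij
  simp only [Function.onFun, disjoint_insert_left, disjoint_insert_right, mem_insert, not_or]
  exact ⟨⟨fun h => hij (hν hi hj h.symm), hνe j hj i hi⟩, hνe i hi j hj, hdisj hi hj hij⟩

end Matchings

section DCond

variable {l d : ℕ} {F : Finset (Finset ℕ)}

lemma pair_mem_of_not_DCond_of_even (hd : ¬ DCond l F d) (he : Even d) {i : ℕ} (hi : 1 ≤ i)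
    (hil : i ≤ l + d / 2) : {i, 2 * l + d + 1 - i} ∈ F := by
  by_contra h
  exact hd (Or.inl ⟨he, i, mem_Icc.2 ⟨hi, hil⟩, h⟩)

lemma pair_mem_of_not_DCond_of_odd (hd : ¬ DCond l F d) (ho : Odd d) {i : ℕ} (hi : 3 ≤ i)
    (hil : i ≤ l + (d + 1) / 2) : {i, 2 * l + d + 2 - i} ∈ F := by
  by_contra h
  exact hd (Or.inr ⟨ho, Or.inr ⟨i, mem_Icc.2 ⟨hi, hil⟩, h⟩⟩)

lemma le_matchingNumber_of_not_DCond_of_even (hd : ¬ DCond l F d) (he : Even d) :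
    l + d / 2 ≤ matchingNumber F := by
  have hdisj : ((Icc 1 (l + d / 2) : Finset ℕ) : Set ℕ).PairwiseDisjoint
      fun i => ({i, 2 * l + d + 1 - i} : Finset ℕ) := by
    intro i hi j hj hij
    simp only [coe_Icc, Set.mem_Icc] at hi hj
    simp only [Function.onFun, disjoint_insert_left, disjoint_insert_right, disjoint_singleton,
      mem_insert, mem_singleton]
    omega
  have := le_matchingNumber_of_pairwiseDisjoint _ _
    (fun i hi => pair_mem_of_not_DCond_of_even hd he (mem_Icc.1 hi).1 (mem_Icc.1 hi).2)
    (fun _ _ => insert_nonempty _ _) hdisj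
  rwa [Nat.card_Icc, Nat.add_sub_cancel] at this

end DCond

namespace IsShifted

variable {n l c : ℕ} {F : Finset (Finset ℕ)}

lemma pair_mem_of_add_le (hsh : IsShifted n F) (hn : 2 * l + c + 1 ≤ n)
    (hd : ∀ d ≤ c + 1, ¬ DCond l F d) {a b : ℕ} (ha : 1 ≤ a) (hab : a < b)
    (hsum : a + b ≤ 2 * l + c + 1) : {a, b} ∈ F := by
  rcases Nat.even_or_odd c with hce | hco
  · have h := pair_mem_of_not_DCond_of_even (hd c (by omega)) hce ha (i := a) (by omega)
    exact hsh.pair_mem_of_le ha hab le_rfl (by omega) (by omega) (by omega) h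
  · have h := pair_mem_of_not_DCond_of_even (hd (c + 1) le_rfl) hco.add_one ha (i := a) (by omega)
    exact hsh.pair_mem_of_le ha hab le_rfl (by omega) (by omega) (by omega) h

lemma pair_mem_of_three_le (hsh : IsShifted n F) (hn : 2 * l + c ≤ n)
    (hd : ∀ d ≤ c + 1, ¬ DCond l F d) {a b : ℕ} (ha : 3 ≤ a) (hab : a < b)
    (hsum : a + b ≤ 2 * l + c + 2) : {a, b} ∈ F := by
  rcases Nat.even_or_odd c with hce | hco
  · have h := pair_mem_of_not_DCond_of_odd (hd (c + 1) le_rfl) hce.add_one ha (by omega)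
    exact hsh.pair_mem_of_le (by omega) hab le_rfl (by omega) (by omega) (by omega) h
  · have h := pair_mem_of_not_DCond_of_even (hd (c + 1) le_rfl) hco.add_one (i := a) (by omega)
      (by omega)
    exact hsh.pair_mem_of_le (by omega) hab le_rfl (by omega) (by omega) (by omega) h

end IsShifted

/-- The `ℓ` pairs `{a, partner m h δ a}`, `a ∈ [1, ℓ + 1] \ {h}`, cover `[ℓ + c + 1, m]` when
`δ = 1`, and `[ℓ + c, m - 1]` when `h = 1` and `δ = 0` (here `m = 2ℓ + c`). -/
def partner (m h δ a : ℕ) : ℕ := if a < h then m + 1 - a else m + 1 + δ - a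

section Partner

variable {l c h δ : ℕ}

lemma partner_bounds (hc : 2 ≤ c) (hh : 1 ≤ h) (hδ : δ ≤ 1) {a : ℕ}
    (ha : a ∈ (Icc 1 (l + 1)).erase h) :
    l + 2 ≤ partner (2 * l + c) h δ a ∧ partner (2 * l + c) h δ a ≤ 2 * l + c := by
  simp only [mem_erase, mem_Icc] at ha
  unfold partner
  split_ifs <;> omega

lemma pairwiseDisjoint_partner (hc : 2 ≤ c) (hδ : δ ≤ 1) :
    (((Icc 1 (l + 1)).erase h : Finset ℕ) : Set ℕ).PairwiseDisjoint
      fun a => ({a, partner (2 * l + c) h δ a} : Finset ℕ) := by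
  intro a ha a' ha' haa
  simp only [coe_erase, coe_Icc, Set.mem_sdiff, Set.mem_Icc, Set.mem_singleton_iff] at ha ha'
  simp only [Function.onFun, disjoint_insert_left, disjoint_insert_right, disjoint_singleton,
    mem_insert, mem_singleton, partner]
  split_ifs <;> omega

lemma IsShifted.pair_partner_mem {n : ℕ} {F : Finset (Finset ℕ)} (hsh : IsShifted n F)
    (hc : 2 ≤ c) (hn : 2 * l + c + 1 ≤ n) (hd : ∀ d ≤ c + 1, ¬ DCond l F d)
    (hhδ : (h = 1 ∧ δ = 0) ∨ (2 ≤ h ∧ δ = 1)) :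
    ∀ a ∈ (Icc 1 (l + 1)).erase h, {a, partner (2 * l + c) h δ a} ∈ F := by
  intro a ha
  simp only [mem_erase, mem_Icc] at ha
  unfold partner
  split_ifs with hah
  · exact hsh.pair_mem_of_add_le hn hd (by omega) (by omega) (by omega)
  · rcases hhδ with ⟨rfl, rfl⟩ | ⟨hh, rfl⟩
    · exact hsh.pair_mem_of_add_le hn hd (by omega) (by omega) (by omega)
    · exact hsh.pair_mem_of_three_le (by omega) hd (by omega) (by omega) (by omega)

end Partner

lemma le_matchingNumber_of_transversal {l c h δ : ℕ} {F : Finset (Finset ℕ)} (hc : 2 ≤ c)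
    (hh : h ∈ Icc 1 (l + 1)) (hδ : δ ≤ 1)
    (hpair : ∀ a ∈ (Icc 1 (l + 1)).erase h, {a, partner (2 * l + c) h δ a} ∈ F)
    (e : ℕ → Finset ℕ) (he : ∀ j ∈ range c, ∀ y ∈ e j, 2 * l + c < y)
    (hdisj : (range c : Set ℕ).PairwiseDisjoint e)
    (ν : ℕ → ℕ) (hνinj : Set.InjOn ν (range c)) (hνm : ∀ j ∈ range c, ν j ≤ 2 * l + c)
    (hνF : ∀ j ∈ range c, insert (ν j) (e j) ∈ F)
    (hνfree : ∀ j ∈ range c, ∀ a ∈ (Icc 1 (l + 1)).erase h,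
      ν j ≠ a ∧ ν j ≠ partner (2 * l + c) h δ a) :
    l + c ≤ matchingNumber F := by
  have hcross : ∀ j ∈ range c, ∀ a ∈ (Icc 1 (l + 1)).erase h,
      Disjoint (insert (ν j) (e j)) {a, partner (2 * l + c) h δ a} := by
    intro j hj a ha
    have hea : a ∉ e j := fun hmem => by
      have := he j hj a hmem
      have := (mem_Icc.1 (mem_erase.1 ha).2).2
      omega
    have hep : partner (2 * l + c) h δ a ∉ e j := fun hmem => by
      have := he j hj _ hmem
      have := partner_bounds hc (mem_Icc.1 hh).1 hδ ha
      omega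
    simp only [disjoint_insert_right, disjoint_singleton_right, mem_insert, not_or]
    exact ⟨⟨(hνfree j hj a ha).1.symm, hea⟩, (hνfree j hj a ha).2.symm, hep⟩
  have := add_le_matchingNumber (range c) ((Icc 1 (l + 1)).erase h) _ _ hνF hpair
    (fun _ _ => insert_nonempty _ _) (fun _ _ => insert_nonempty _ _)
    (pairwiseDisjoint_insert hdisj hνinj fun i hi j hj hmem => by
      have := he j hj _ hmem
      have := hνm i hi
      omega)
    (pairwiseDisjoint_partner hc hδ) hcross
  rwa [card_range, card_erase_of_mem hh, Nat.card_Icc, Nat.add_sub_cancel, add_comm] at this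

/-- Hall's theorem for the intervals `[M + 1, min (W q) (M + #Q)]`, proved greedily: some `q₀`
has `W q₀ ≥ M + #Q` and takes the value `M + #Q`. -/
lemma exists_injOn_of_card_filter_le {α : Type*} [DecidableEq α] (W : α → ℕ) (M : ℕ)
    (Q : Finset α) (hQ : ∀ t ≤ #Q, #{q ∈ Q | W q ≤ M + t} ≤ t) :
    ∃ μ : α → ℕ, Set.InjOn μ Q ∧ ∀ q ∈ Q, M + 1 ≤ μ q ∧ μ q ≤ M + #Q ∧ μ q ≤ W q := by
  induction hk : #Q generalizing Q with
  | zero => simp [card_eq_zero.1 hk]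
  | succ k ih =>
    obtain ⟨q₀, hq₀, hWq₀⟩ : ∃ q ∈ Q, M + k + 1 ≤ W q := by
      by_contra! hlow
      have := hQ k (by omega)
      rw [filter_true_of_mem fun q hq => by have := hlow q hq; omega] at this
      omega
    obtain ⟨μ, hμinj, hμ⟩ := ih (Q.erase q₀)
      (fun t ht => (card_le_card (filter_subset_filter _ (erase_subset _ _))).trans
        (hQ t (ht.trans (card_le_card (erase_subset _ _)))))
      (by rw [card_erase_of_mem hq₀, hk]; rfl)
    have hEq : Set.EqOn (Function.update μ q₀ (M + k + 1)) μ (Q.erase q₀) :=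
      fun q hq => Function.update_of_ne (mem_erase.1 hq).1 _ _
    refine ⟨Function.update μ q₀ (M + k + 1), ?_, fun q hq => ?_⟩
    · rw [← insert_erase hq₀, coe_insert, Set.injOn_insert (by simp)]
      refine ⟨hμinj.congr hEq.symm, ?_⟩
      rintro ⟨q, hq, hμq⟩
      rw [hEq hq, Function.update_self] at hμq
      have := hμ q hq
      omega
    · rcases eq_or_ne q q₀ with rfl | hqq
      · simp only [Function.update_self]
        omega
      · have := hμ q (mem_erase.2 ⟨hqq, hq⟩)
        simp only [Function.update_of_ne hqq]
        omega

section Deficit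

variable {l c : ℕ} {W : ℕ → ℕ} (hsum : ∑ j ∈ range c, (2 * l + c - W j) < 2 * l + c)
include hsum

lemma one_le_of_sum_sub_lt {j : ℕ} (hj : j ∈ range c) : 1 ≤ W j := by
  have := single_le_sum (f := fun j => 2 * l + c - W j) (fun _ _ => Nat.zero_le _) hj
  omega

lemma le_of_sum_sub_lt_of_eq_one {j₀ j : ℕ} (hj₀ : j₀ ∈ range c) (hW : W j₀ = 1)
    (hj : j ∈ range c) (hne : j ≠ j₀) : 2 * l + c ≤ W j := by
  have := sum_pair (f := fun j => 2 * l + c - W j) hne.symm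
  have := sum_le_sum_of_subset (f := fun j => 2 * l + c - W j)
    (insert_subset hj₀ (singleton_subset_iff.2 hj))
  omega

/-- Each `j` with `W j ≤ ℓ + k - 1` contributes at least `ℓ + c + 1 - k` to the sum, and
`k (ℓ + c + 1 - k) ≥ 2ℓ + c` for `2 ≤ k ≤ c`. -/
lemma card_filter_le_of_sum_sub_lt {k : ℕ} (hk : 2 ≤ k) (hkc : k ≤ c) :
    #{j ∈ range c | W j ≤ l + k - 1} ≤ k - 1 := by
  by_contra! hbig
  obtain ⟨e, rfl⟩ : ∃ e, c = k + e := ⟨c - k, by omega⟩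
  set S := {j ∈ range (k + e) | W j ≤ l + k - 1}
  have hterm : ∀ j ∈ S, l + e + 1 ≤ 2 * l + (k + e) - W j := fun j hj => by
    have := (mem_filter.1 hj).2
    omega
  have hS := card_nsmul_le_sum S _ _ hterm
  rw [smul_eq_mul] at hS
  have := sum_le_sum_of_subset (f := fun j => 2 * l + (k + e) - W j) (s := S) (filter_subset _ _)
  have := Nat.mul_le_mul_right (l + e + 1) (show k ≤ #S by omega)
  have : 2 * l + (k + e) ≤ k * (l + e + 1) := by nlinarith
  omega

lemma card_filter_erase_le_of_sum_sub_lt {j₀ : ℕ} (hj₀ : j₀ ∈ range c)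
    (hmin : ∀ j ∈ range c, W j₀ ≤ W j) {t : ℕ} (ht : t ≤ c - 1) :
    #{q ∈ (range c).erase j₀ | W q ≤ l + 1 + t} ≤ t := by
  by_cases hW : W j₀ ≤ l + 1 + t
  · obtain rfl | ht := ht.eq_or_lt
    · exact (card_filter_le _ _).trans (by rw [card_erase_of_mem hj₀, card_range])
    have hsub : insert j₀ {q ∈ (range c).erase j₀ | W q ≤ l + 1 + t} ⊆
        {j ∈ range c | W j ≤ l + (t + 2) - 1} := by
      intro q hq
      simp only [mem_insert, mem_filter, mem_erase] at hq ⊢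
      rcases hq with rfl | ⟨⟨_, hq⟩, hWq⟩
      exacts [⟨hj₀, by omega⟩, ⟨hq, by omega⟩]
    have := (card_le_card hsub).trans (card_filter_le_of_sum_sub_lt hsum (by omega) (by omega))
    rw [card_insert_of_notMem (by simp)] at this
    omega
  · rw [filter_false_of_mem fun q hq => by have := hmin q (mem_of_mem_erase hq); omega]
    exact (card_empty).trans_le (Nat.zero_le t)

end Deficit

section Transversal

variable {n l c : ℕ} {F : Finset (Finset ℕ)} {e : ℕ → Finset ℕ} {W μ : ℕ → ℕ} {j₀ : ℕ}
  (hsh : IsShifted n F) (hc : 2 ≤ c) (hn : 2 * l + c + 1 ≤ n) (hd : ∀ d ≤ c + 1, ¬ DCond l F d)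
  (he : ∀ j ∈ range c, ∀ y ∈ e j, 2 * l + c < y) (hdisj : (range c : Set ℕ).PairwiseDisjoint e)
  (hW : ∀ j ∈ range c, ∀ x, 1 ≤ x → x ≤ W j → insert x (e j) ∈ F)
  (hμ : ∀ j ∈ range c, j ≠ j₀ → l + 2 ≤ μ j ∧ μ j ≤ l + c ∧ μ j ≤ W j)
  (hμinj : ∀ j ∈ range c, ∀ j' ∈ range c, j ≠ j₀ → j' ≠ j₀ → μ j = μ j' → j = j')
include hsh hc hn hd he hdisj hW hμ hμinj

/-- Take `ν j₀ = 1`. The only forced pair through `2ℓ + c` is `{1, 2ℓ + c}`, so `2ℓ + c` must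
be covered by a triple: the value `ℓ + c` of `μ` is moved there. -/
lemma le_matchingNumber_of_eq_one (hW₀ : W j₀ = 1)
    (hWj : ∀ j ∈ range c, j ≠ j₀ → 2 * l + c ≤ W j) : l + c ≤ matchingNumber F := by
  let ν : ℕ → ℕ := fun j => if j = j₀ then 1 else if μ j = l + c then 2 * l + c else μ j
  refine le_matchingNumber_of_transversal (h := 1) (δ := 0) hc (by simp) zero_le_one
    (hsh.pair_partner_mem hc hn hd (.inl ⟨rfl, rfl⟩)) e he hdisj ν ?_ ?_ ?_ ?_
  · intro j hj j' hj' hjj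
    have := hμ j hj
    have := hμ j' hj'
    have := hμinj j hj j' hj'
    simp only [ν] at hjj
    split_ifs at hjj <;> omega
  · intro j hj
    have := hμ j hj
    simp only [ν]
    split_ifs <;> omega
  · intro j hj
    have := hμ j hj
    have := hWj j hj
    simp only [ν]
    split_ifs with h₀
    · exact hW j hj 1 le_rfl (h₀ ▸ hW₀.ge)
    all_goals exact hW j hj _ (by omega) (by omega)
  · intro j hj a ha
    simp only [mem_erase, mem_Icc] at ha
    have := hμ j hj
    simp only [ν, partner]
    split_ifs <;> omega

lemma le_matchingNumber_of_two_le (hl : 1 ≤ l) (hW₀ : 2 ≤ W j₀)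
    (hmin : ∀ j ∈ range c, W j₀ ≤ W j) : l + c ≤ matchingNumber F := by
  let h := min (W j₀) (l + 1)
  let ν : ℕ → ℕ := fun j => if j = j₀ then h else μ j
  refine le_matchingNumber_of_transversal (h := h) (δ := 1) hc (by simp [h]; omega) le_rfl
    (hsh.pair_partner_mem hc hn hd (.inr ⟨by omega, rfl⟩)) e he hdisj ν ?_ ?_ ?_ ?_
  · intro j hj j' hj' hjj
    have := hμ j hj
    have := hμ j' hj'
    have := hμinj j hj j' hj'
    simp only [ν] at hjj
    split_ifs at hjj <;> omega
  · intro j hj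
    have := hμ j hj
    simp only [ν]
    split_ifs <;> omega
  · intro j hj
    have := hμ j hj
    have := hmin j hj
    simp only [ν]
    split_ifs <;> exact hW j hj _ (by omega) (by omega)
  · intro j hj a ha
    simp only [mem_erase, mem_Icc] at ha
    have := hμ j hj
    simp only [ν, partner]
    split_ifs <;> omega

end Transversal

theorem IsShifted.le_sum_sub_of_insert_mem {n l c : ℕ} {F : Finset (Finset ℕ)}
    (hsh : IsShifted n F) (hl : 1 ≤ l) (hc : 2 ≤ c) (hn : 2 * l + c + 1 ≤ n)
    (hnu : matchingNumber F < l + c) (hd : ∀ d ≤ c + 1, ¬ DCond l F d)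
    (e : ℕ → Finset ℕ) (he : ∀ j ∈ range c, ∀ y ∈ e j, 2 * l + c < y)
    (hdisj : (range c : Set ℕ).PairwiseDisjoint e)
    (W : ℕ → ℕ) (hW : ∀ j ∈ range c, ∀ x, 1 ≤ x → x ≤ W j → insert x (e j) ∈ F) :
    2 * l + c ≤ ∑ j ∈ range c, (2 * l + c - W j) := by
  by_contra! hsum
  obtain ⟨j₀, hj₀, hmin⟩ := (range c).exists_min_image W (nonempty_range_iff.2 (by omega))
  have hcard : #((range c).erase j₀) = c - 1 := by rw [card_erase_of_mem hj₀, card_range]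
  obtain ⟨μ, hμinj, hμ⟩ := exists_injOn_of_card_filter_le W (l + 1) ((range c).erase j₀)
    fun t ht => card_filter_erase_le_of_sum_sub_lt hsum hj₀ hmin (hcard ▸ ht)
  replace hμ : ∀ j ∈ range c, j ≠ j₀ → l + 2 ≤ μ j ∧ μ j ≤ l + c ∧ μ j ≤ W j :=
    fun j hj hne => by have := hμ j (mem_erase.2 ⟨hne, hj⟩); omega
  replace hμinj : ∀ j ∈ range c, ∀ j' ∈ range c, j ≠ j₀ → j' ≠ j₀ → μ j = μ j' → j = j' :=
    fun j hj j' hj' hne hne' => hμinj (mem_erase.2 ⟨hne, hj⟩) (mem_erase.2 ⟨hne', hj'⟩)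
  refine hnu.not_ge ?_
  rcases (one_le_of_sum_sub_lt hsum hj₀).eq_or_lt with hW₀ | hW₀
  · exact le_matchingNumber_of_eq_one hsh hc hn hd he hdisj hW hμ hμinj hW₀.symm
      fun j hj hne => le_of_sum_sub_lt_of_eq_one hsum hj₀ hW₀.symm hj hne
  · exact le_matchingNumber_of_two_le hsh hc hn hd he hdisj hW hμ hμinj hl hW₀ hmin

def missingBelow (F : Finset (Finset ℕ)) (m : ℕ) (e : Finset ℕ) : ℕ :=
  #{x ∈ Icc 1 m | insert x e ∉ F}

lemma missingBelow_le (F : Finset (Finset ℕ)) (m : ℕ) (e : Finset ℕ) : missingBelow F m e ≤ m :=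
  (card_filter_le _ _).trans (by simp)

/-- By shiftedness the `x` with `insert x e ∈ F` form an initial segment of `[1, m]`. -/
lemma IsShifted.insert_mem_of_le_sub_missingBelow {n m : ℕ} {F : Finset (Finset ℕ)}
    {e : Finset ℕ} (hsh : IsShifted n F) (hmn : m ≤ n) (he : ∀ y ∈ e, m < y) {x : ℕ} (hx : 1 ≤ x)
    (hxm : x ≤ m - missingBelow F m e) : insert x e ∈ F := by
  by_contra hxF
  have hsub : Icc x m ⊆ {y ∈ Icc 1 m | insert y e ∉ F} := by
    intro y hy
    rw [mem_Icc] at hy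
    refine mem_filter.2 ⟨mem_Icc.2 ⟨by omega, hy.2⟩, fun hyF => hxF ?_⟩
    exact hsh.insert_mem_of_le hx hy.1 (by omega) (fun h => by have := he x h; omega)
      (fun h => by have := he y h; omega) hyF
  have := card_le_card hsub
  rw [Nat.card_Icc] at this
  unfold missingBelow at hxm
  omega

theorem IsShifted.le_sum_missingBelow {n l c : ℕ} {F : Finset (Finset ℕ)}
    (hsh : IsShifted n F) (hl : 1 ≤ l) (hc : 2 ≤ c) (hn : 2 * l + c + 1 ≤ n)
    (hnu : matchingNumber F < l + c) (hd : ∀ d ≤ c + 1, ¬ DCond l F d)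
    (e : ℕ → Finset ℕ) (he : ∀ j ∈ range c, ∀ y ∈ e j, 2 * l + c < y)
    (hdisj : (range c : Set ℕ).PairwiseDisjoint e) :
    2 * l + c ≤ ∑ j ∈ range c, missingBelow F (2 * l + c) (e j) := by
  refine (hsh.le_sum_sub_of_insert_mem hl hc hn hnu hd e he hdisj
    (fun j => 2 * l + c - missingBelow F (2 * l + c) (e j)) fun j hj x hx hxW =>
      hsh.insert_mem_of_le_sub_missingBelow (by omega) (he j hj) hx hxW).trans
    (sum_le_sum fun j _ => ?_)
  have := missingBelow_le F (2 * l + c) (e j)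
  omega

lemma yF_eq_card_sdiff (n : ℕ) (F : Finset (Finset ℕ)) (k : ℕ) :
    yF n F k = #((ground n).powersetCard k \ F) := by
  rw [yF, layer, card_sdiff, card_powersetCard, ground, Nat.card_Icc, Nat.add_sub_cancel]

lemma eq_and_eq_of_insert_eq_insert {m x x' : ℕ} {e e' : Finset ℕ} (hx : x ≤ m) (hx' : x' ≤ m)
    (he : ∀ y ∈ e, m < y) (he' : ∀ y ∈ e', m < y) (h : insert x e = insert x' e') :
    x = x' ∧ e = e' := by
  have hee : e = e' := by
    have := congrArg (filter (m < ·)) h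
    simpa only [filter_insert, show ¬ m < x by omega, show ¬ m < x' by omega, if_false,
      filter_true_of_mem he, filter_true_of_mem he'] using this
  subst hee
  exact ⟨(insert_inj fun hxe => by have := he x hxe; omega).1 h, rfl⟩

lemma sum_missingBelow_le_yF {ι : Type*} {n m : ℕ} {F : Finset (Finset ℕ)} (I : Finset ι)
    (E : ι → Finset ℕ) (hinj : Set.InjOn E I)
    (hE : ∀ i ∈ I, #(E i) = 2 ∧ ∀ y ∈ E i, m < y ∧ y ≤ n) :
    ∑ i ∈ I, missingBelow F m (E i) ≤ yF n F 3 := by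
  have hsum : ∑ i ∈ I, missingBelow F m (E i) = #{p ∈ I ×ˢ Icc 1 m | insert p.2 (E p.1) ∉ F} := by
    rw [card_filter, sum_product]
    simp only [missingBelow, card_filter]
  rw [hsum, yF_eq_card_sdiff]
  refine card_le_card_of_injOn (fun p => insert p.2 (E p.1)) ?_ ?_
  · rintro ⟨i, x⟩ hp
    simp only [coe_filter, mem_product, mem_Icc, Set.mem_ofPred_eq] at hp
    obtain ⟨⟨hi, hx1, hxm⟩, hxF⟩ := hp
    obtain ⟨hcard, hy⟩ := hE i hi
    obtain ⟨y, hyE⟩ := card_pos.1 (hcard ▸ two_pos)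
    have := hy y hyE
    have hxE : x ∉ E i := fun hxE => by have := hy x hxE; omega
    simp only [coe_sdiff, Set.mem_sdiff, mem_coe, mem_powersetCard]
    refine ⟨⟨insert_subset (mem_Icc.2 ⟨hx1, by omega⟩) fun z hz => ?_, ?_⟩, hxF⟩
    · have := hy z hz
      exact mem_Icc.2 ⟨by omega, this.2⟩
    · rw [card_insert_of_notMem hxE, hcard]
  · rintro ⟨i, x⟩ hp ⟨i', x'⟩ hp' heq
    simp only [coe_filter, mem_product, mem_Icc, Set.mem_ofPred_eq] at hp hp'
    obtain ⟨hxx, hEE⟩ := eq_and_eq_of_insert_eq_insert hp.1.2.2 hp'.1.2.2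
      (fun y hy => ((hE i hp.1.1).2 y hy).1) (fun y hy => ((hE i' hp'.1.1).2 y hy).1) heq
    rw [hinj hp.1.1 hp'.1.1 hEE, hxx]

/-- The `j`-th edge (`j < c`) of the `f`-th perfect matching (`f < 2c - 1`) in the round-robin
one-factorization of the complete graph on `[o, o + 2c - 1]`: `o + f` is matched with the centre
`o + 2c - 1`, and `o + (f - j)` with `o + (f + j)`, indices read modulo `2c - 1`. -/
def roundRobin (o c f j : ℕ) : Finset ℕ :=
  if j = 0 then {o + f, o + (2 * c - 1)}
  else {o + if j ≤ f then f - j else f + (2 * c - 1) - j,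
    o + if f + j < 2 * c - 1 then f + j else f + j - (2 * c - 1)}

section RoundRobin

variable {o c f j : ℕ}

lemma roundRobin_bounds (hf : f < 2 * c - 1) (hj : j < c) {y : ℕ} (hy : y ∈ roundRobin o c f j) :
    o ≤ y ∧ y ≤ o + (2 * c - 1) := by
  unfold roundRobin at hy
  split_ifs at hy <;> simp only [mem_insert, mem_singleton] at hy <;> omega

lemma card_roundRobin (hf : f < 2 * c - 1) (hj : j < c) : #(roundRobin o c f j) = 2 := by
  unfold roundRobin
  split_ifs <;> rw [card_pair (by omega)]

lemma pairwiseDisjoint_roundRobin (hf : f < 2 * c - 1) :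
    (range c : Set ℕ).PairwiseDisjoint (roundRobin o c f) := by
  intro j hj j' hj' hjj
  simp only [coe_range, Set.mem_Iio] at hj hj'
  simp only [Function.onFun, roundRobin]
  split_ifs <;>
    simp only [disjoint_insert_left, disjoint_singleton_left, mem_insert, mem_singleton] <;>
    omega

lemma injOn_roundRobin :
    Set.InjOn (fun q : ℕ × ℕ => roundRobin o c q.1 q.2) (range (2 * c - 1) ×ˢ range c : Finset _) := by
  rintro ⟨f, j⟩ hq ⟨f', j'⟩ hq' heq
  simp only [coe_product, coe_range, Set.mem_prod, Set.mem_Iio] at hq hq'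
  replace heq := congrArg ((↑) : Finset ℕ → Set ℕ) heq
  simp only [roundRobin] at heq
  split_ifs at heq <;> simp only [coe_pair, Set.pair_eq_pair_iff] at heq <;>
    simp only [Prod.mk.injEq] <;> omega

end RoundRobin

theorem stmt_16_general (n s l c : ℕ) (hl0 : 0 < l) (hc0 : 0 < c)
    (hcl : c + l = s) (hn : n = 2 * l + 3 * c)
    (F : Finset (Finset ℕ)) (hsh : IsShifted n F)
    (hnu : matchingNumber F < s) (hd : c + 2 ≤ dF l F) :
    (2 * l + c) * (2 * c - 1) ≤ yF n F 3 := by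
  subst hcl
  have hd' : ∀ d ≤ c + 1, ¬ DCond l F d := fun d hdc =>
    Nat.notMem_of_lt_sInf ((show d < c + 2 by omega).trans_le hd)
  obtain rfl | hc : c = 1 ∨ 2 ≤ c := by omega
  · have := le_matchingNumber_of_not_DCond_of_even (hd' 2 le_rfl) even_two
    omega
  calc (2 * l + c) * (2 * c - 1) = ∑ _f ∈ range (2 * c - 1), (2 * l + c) := by
        rw [sum_const, card_range, smul_eq_mul, mul_comm]
    _ ≤ ∑ f ∈ range (2 * c - 1), ∑ j ∈ range c,
          missingBelow F (2 * l + c) (roundRobin (2 * l + c + 1) c f j) :=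
        sum_le_sum fun f hf => hsh.le_sum_missingBelow hl0 hc (by omega) (by omega) hd' _
          (fun j hj y hy => by have := roundRobin_bounds (mem_range.1 hf) (mem_range.1 hj) hy; omega)
          (pairwiseDisjoint_roundRobin (mem_range.1 hf))
    _ = ∑ q ∈ range (2 * c - 1) ×ˢ range c,
          missingBelow F (2 * l + c) (roundRobin (2 * l + c + 1) c q.1 q.2) := by
        rw [sum_product]
    _ ≤ yF n F 3 := sum_missingBelow_le_yF _ _ injOn_roundRobin fun q hq => by
        obtain ⟨hf, hj⟩ := mem_product.1 hq
        refine ⟨card_roundRobin (mem_range.1 hf) (mem_range.1 hj), fun y hy => ?_⟩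
        have := roundRobin_bounds (mem_range.1 hf) (mem_range.1 hj) hy
        omega

theorem stmt_16 (n s l c : ℕ) (hs0 : 0 < s) (hl0 : 0 < l) (hc0 : 0 < c)
    (hcl : c + l = s) (hn : n = 2 * l + 3 * c)
    (F : Finset (Finset ℕ)) (hF : ∀ A ∈ F, A ⊆ ground n) (hsh : IsShifted n F)
    (hnu : matchingNumber F < s) (hd : c + 2 ≤ dF l F) :
    (2 * l + c) * (2 * c - 1) ≤ yF n F 3 :=
  stmt_16_general n s l c hl0 hc0 hcl hn F hsh hnu hd
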